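/- Let a, b > 0 and c be real numbers with coth a + coth b = 2c. Then c > 1 and (a + b)/2 ≥ artanh(1/c). -/

import Mathlib

open Real

/-- The hyperbolic cotangent. -/
noncomputable def Real.coth (x : ℝ) : ℝ := Real.cosh x / Real.sinh x

/-- The inverse hyperbolic tangent. -/
noncomputable def Real.artanh' (x : ℝ) : ℝ := (1 / 2) * Real.log ((1 + x) / (1 - x))

/-!
Since `coth` is convex on `(0, ∞)`, the mirror equation gives `coth m ≤ c` for the midpoint
`m = (a + b) / 2`; hence `1 < coth m ≤ c` and `1 / c ≤ tanh m`, and applying the increasing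
function `artanh` yields `artanh (1 / c) ≤ m`.
-/

namespace Real

theorem coth_eq_inv_tanh (x : ℝ) : coth x = (tanh x)⁻¹ := by
  rw [coth, tanh_eq_sinh_div_cosh, inv_div]

theorem tanh_pos {x : ℝ} (hx : 0 < x) : 0 < tanh x := by
  rw [tanh_eq_sinh_div_cosh]
  exact div_pos (sinh_pos_iff.2 hx) (cosh_pos x)

theorem one_lt_coth {x : ℝ} (hx : 0 < x) : 1 < coth x := by
  rw [coth_eq_inv_tanh]
  exact one_lt_inv₀ (tanh_pos hx) |>.2 (tanh_lt_one x)

theorem artanh'_eq_artanh {x : ℝ} (hx : x ∈ Set.Icc (-1) 1) : artanh' x = artanh x :=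
  (artanh_eq_half_log hx).symm

theorem coth_add_coth {a b : ℝ} (ha : sinh a ≠ 0) (hb : sinh b ≠ 0) :
    coth a + coth b = sinh (a + b) / (sinh a * sinh b) := by
  rw [coth, coth, sinh_add]
  field_simp
  ring

/-- `2 sinh a sinh b = cosh (a + b) - cosh (a - b)` and `cosh (a - b) ≥ 1`. -/
theorem sinh_mul_sinh_le_sinh_sq_half_add (a b : ℝ) :
    sinh a * sinh b ≤ sinh ((a + b) / 2) ^ 2 := by
  have h₁ := cosh_add a b
  have h₂ := cosh_sub a b
  have h₃ := cosh_two_mul ((a + b) / 2)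
  have h₄ := cosh_sq ((a + b) / 2)
  rw [mul_div_cancel₀ _ two_ne_zero] at h₃
  linarith [one_le_cosh (a - b)]

theorem two_mul_coth_half_add_le {a b : ℝ} (ha : 0 < a) (hb : 0 < b) :
    2 * coth ((a + b) / 2) ≤ coth a + coth b := by
  set m := (a + b) / 2
  have hsa := sinh_pos_iff.2 ha
  have hsb := sinh_pos_iff.2 hb
  have hm : a + b = 2 * m := by ring
  calc 2 * coth m = sinh (a + b) / sinh m ^ 2 := by
        rw [hm, sinh_two_mul, coth]
        field_simp
    _ ≤ sinh (a + b) / (sinh a * sinh b) :=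
        div_le_div_of_nonneg_left (sinh_pos_iff.2 (by positivity)).le (by positivity)
          (sinh_mul_sinh_le_sinh_sq_half_add a b)
    _ = coth a + coth b := (coth_add_coth hsa.ne' hsb.ne').symm

theorem artanh_le_of_coth_le {x c : ℝ} (hx : 0 < x) (hc : coth x ≤ c) : artanh (1 / c) ≤ x := by
  have hcoth := one_lt_coth hx
  have hc₀ : 0 < 1 / c := one_div_pos.2 (zero_lt_one.trans (hcoth.trans_le hc))
  calc artanh (1 / c) ≤ artanh (tanh x) := by
        refine artanh_le_artanh (by linarith) (tanh_lt_one x) ?_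
        rw [← inv_inv (tanh x), ← coth_eq_inv_tanh, ← one_div]
        exact one_div_le_one_div_of_le (by linarith) hc
    _ = x := artanh_tanh x

end Real

/-- Pointwise consequence of the hyperbolic mirror equation: if `a, b > 0` and
`coth a + coth b = 2c`, then `c > 1` and `(a + b)/2 ≥ artanh(1/c)`. -/
theorem midpoint_bound_of_coth_add_coth (a b c : ℝ) (ha : 0 < a) (hb : 0 < b)
    (h : Real.coth a + Real.coth b = 2 * c) :
    1 < c ∧ (a + b) / 2 ≥ Real.artanh' (1 / c) := by
  have hm : 0 < (a + b) / 2 := by positivity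
  have hcoth : coth ((a + b) / 2) ≤ c := by linarith [two_mul_coth_half_add_le ha hb]
  have hc : 1 < c := (one_lt_coth hm).trans_le hcoth
  refine ⟨hc, ?_⟩
  have hc' : 1 / c ∈ Set.Icc (-1) 1 :=
    ⟨by linarith [one_div_pos.2 (zero_lt_one.trans hc)], (div_lt_one (by linarith)).2 hc |>.le⟩
  rw [ge_iff_le, artanh'_eq_artanh hc']
  exact artanh_le_of_coth_le hm hcoth
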